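/- arXiv:1407.4070 — 2 statements merged into one kernel-verified Lean document; each statement's English description precedes it below -/
import Mathlib

section
/- (Deterministic part of the median argument) Let v^(1),...,v^(T) ∈ ℝ^k, and let S ⊆ {1,...,T} be the set of indices s with ‖v^(s)‖₂² ≤ α. If |S| > 3T/4, then ‖median_s(v^(s))‖₂² ≤ 4α. -/
/-!
In each coordinate, at least half of the values `v s j` have absolute value at least that of
the median (those on the far side of the median from `0`). A set of more than `3T/4` indices
therefore meets them in more than `T/4` indices, so
`(2 #S - T) * median_j ^ 2 ≤ 2 * ∑_{s ∈ S} (v s j) ^ 2`. Summing over `j` and using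
`‖v s‖² ≤ α` on `S` gives `‖median‖² ≤ 3α`.
-/

/-- The median of a finite tuple of reals: the middle element (upper median)
of the sorted list of values. -/
noncomputable def medianVal {T : ℕ} (f : Fin T → ℝ) : ℝ :=
  (List.insertionSort (· ≤ ·) (List.ofFn f)).getD (T / 2) 0

/-- The coordinatewise median of a family of vectors in `ℝ^k`. -/
noncomputable def medianVec {T k : ℕ} (v : Fin T → EuclideanSpace ℝ (Fin k)) :
    EuclideanSpace ℝ (Fin k) :=
  WithLp.toLp 2 (fun j => medianVal (fun s => v s j))

open Finset

namespace List

variable {α : Type*} [Preorder α] [DecidableLE α] {l : List α}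

theorem Pairwise.length_sub_le_countP_getElem_le (hl : l.Pairwise (· ≤ ·)) {i : ℕ}
    (hi : i < l.length) : l.length - i ≤ l.countP (fun x => l[i] ≤ x) := by
  have hdrop : ∀ x ∈ l.drop i, l[i] ≤ x := by
    have hpair := hl.drop (i := i)
    rw [drop_eq_getElem_cons hi, pairwise_cons] at hpair
    rw [drop_eq_getElem_cons hi]
    rintro x (_ | ⟨_, hx⟩)
    exacts [le_rfl, hpair.1 x hx]
  calc l.length - i = (l.drop i).countP (fun x => l[i] ≤ x) := by
        rw [countP_eq_length.2 (by simpa using hdrop), length_drop]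
    _ ≤ l.countP (fun x => l[i] ≤ x) := (drop_sublist i l).countP_le

theorem Pairwise.succ_le_countP_le_getElem (hl : l.Pairwise (· ≤ ·)) {i : ℕ}
    (hi : i < l.length) : i + 1 ≤ l.countP (fun x => x ≤ l[i]) := by
  have htake : ∀ x ∈ l.take (i + 1), x ≤ l[i] := by
    have hpair := hl.take (i := i + 1)
    rw [take_add_one, getElem?_eq_getElem hi, Option.toList_some, pairwise_append] at hpair
    rw [take_add_one, getElem?_eq_getElem hi, Option.toList_some]
    intro x hx
    rcases mem_append.1 hx with hx | hx
    · exact hpair.2.2 x hx _ (mem_singleton_self _)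
    · rw [mem_singleton.1 hx]
  calc i + 1 = (l.take (i + 1)).countP (fun x => x ≤ l[i]) := by
        rw [countP_eq_length.2 (by simpa using htake), length_take]
        omega
    _ ≤ l.countP (fun x => x ≤ l[i]) := (take_sublist _ l).countP_le

end List

theorem Fin.card_filter_univ_eq_countP_ofFn {α : Type*} {T : ℕ} (f : Fin T → α) (p : α → Prop)
    [DecidablePred p] : #{s | p (f s)} = (List.ofFn f).countP (fun x => p x) := by
  rw [← Multiset.coe_countP, ← Fin.univ_val_map, Multiset.countP_map]
  rfl

section Median

variable {T : ℕ} (f : Fin T → ℝ)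

theorem medianVal_eq_getElem (hT : 0 < T) :
    medianVal f = (List.insertionSort (· ≤ ·) (List.ofFn f))[T / 2]'(by simp; omega) :=
  List.getD_eq_getElem _ _ _

theorem sub_half_le_card_medianVal_le : T - T / 2 ≤ #{s | medianVal f ≤ f s} := by
  rcases Nat.eq_zero_or_pos T with rfl | hT
  · simp
  have h := (List.pairwise_insertionSort (· ≤ ·) (List.ofFn f)).length_sub_le_countP_getElem_le
    (i := T / 2) (by simp; omega)
  rw [← medianVal_eq_getElem f hT, (List.perm_insertionSort _ _).countP_eq] at h
  rw [Fin.card_filter_univ_eq_countP_ofFn f (medianVal f ≤ ·)]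
  simpa using h

theorem half_succ_le_card_le_medianVal (hT : 0 < T) :
    T / 2 + 1 ≤ #{s | f s ≤ medianVal f} := by
  have h := (List.pairwise_insertionSort (· ≤ ·) (List.ofFn f)).succ_le_countP_le_getElem
    (i := T / 2) (by simp; omega)
  rw [← medianVal_eq_getElem f hT, (List.perm_insertionSort _ _).countP_eq] at h
  rw [Fin.card_filter_univ_eq_countP_ofFn f (· ≤ medianVal f)]
  simpa using h

theorem le_two_mul_card_sq_medianVal_le : T ≤ 2 * #{s | medianVal f ^ 2 ≤ f s ^ 2} := by
  rcases Nat.eq_zero_or_pos T with rfl | hT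
  · simp
  rcases le_or_gt 0 (medianVal f) with hm | hm
  · have hsub : univ.filter (fun s => medianVal f ≤ f s) ⊆
        univ.filter (fun s => medianVal f ^ 2 ≤ f s ^ 2) :=
      monotone_filter_right _ fun s _ hs => pow_le_pow_left₀ hm hs 2
    have hmono := card_le_card hsub
    have hhalf := sub_half_le_card_medianVal_le f
    omega
  · have hsub : univ.filter (fun s => f s ≤ medianVal f) ⊆
        univ.filter (fun s => medianVal f ^ 2 ≤ f s ^ 2) :=
      monotone_filter_right _ fun s _ (hs : f s ≤ medianVal f) => by nlinarith
    have hmono := card_le_card hsub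
    have hhalf := half_succ_le_card_le_medianVal f hT
    omega

theorem two_mul_card_sub_mul_sq_medianVal_le (S : Finset (Fin T)) :
    (2 * #S - T : ℝ) * medianVal f ^ 2 ≤ 2 * ∑ s ∈ S, f s ^ 2 := by
  set A : Finset (Fin T) := {s | medianVal f ^ 2 ≤ f s ^ 2}
  have hcard : (2 * #S - T : ℝ) ≤ 2 * #(S ∩ A) := by
    have hA : T ≤ 2 * #A := le_two_mul_card_sq_medianVal_le f
    have hunion := card_union_add_card_inter S A
    have hle : #(S ∪ A) ≤ T := by simpa using card_le_univ (S ∪ A)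
    have hnat : 2 * #S ≤ T + 2 * #(S ∩ A) := by omega
    have hreal : (2 * #S : ℝ) ≤ T + 2 * #(S ∩ A) := by exact_mod_cast hnat
    linarith
  calc (2 * #S - T : ℝ) * medianVal f ^ 2 ≤ 2 * #(S ∩ A) * medianVal f ^ 2 := by gcongr
    _ = 2 * ∑ s ∈ S ∩ A, medianVal f ^ 2 := by rw [sum_const, nsmul_eq_mul, mul_assoc]
    _ ≤ 2 * ∑ s ∈ S ∩ A, f s ^ 2 := by
        gcongr 2 * ?_
        exact sum_le_sum fun s hs => (mem_filter.1 (mem_inter.1 hs).2).2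
    _ ≤ 2 * ∑ s ∈ S, f s ^ 2 := by
        gcongr 2 * ?_
        exact sum_le_sum_of_subset_of_nonneg inter_subset_left fun s _ _ => sq_nonneg _

end Median

theorem two_mul_card_sub_mul_norm_sq_medianVec_le {T k : ℕ}
    (v : Fin T → EuclideanSpace ℝ (Fin k)) (S : Finset (Fin T)) :
    (2 * #S - T : ℝ) * ‖medianVec v‖ ^ 2 ≤ 2 * ∑ s ∈ S, ‖v s‖ ^ 2 := by
  calc (2 * #S - T : ℝ) * ‖medianVec v‖ ^ 2
        = ∑ j, (2 * #S - T : ℝ) * medianVal (fun s => v s j) ^ 2 := by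
        rw [EuclideanSpace.real_norm_sq_eq, mul_sum]
        rfl
    _ ≤ ∑ j, 2 * ∑ s ∈ S, v s j ^ 2 :=
        sum_le_sum fun j _ => two_mul_card_sub_mul_sq_medianVal_le _ S
    _ = 2 * ∑ s ∈ S, ‖v s‖ ^ 2 := by
        simp only [EuclideanSpace.real_norm_sq_eq, ← mul_sum]
        rw [sum_comm]

theorem stmt2_general {T k : ℕ} (v : Fin T → EuclideanSpace ℝ (Fin k)) (α : ℝ)
    (hS : (3 * T : ℝ) / 4 < (Finset.univ.filter (fun s => ‖v s‖ ^ 2 ≤ α)).card) :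
    ‖medianVec v‖ ^ 2 ≤ 4 * α := by
  set S := Finset.univ.filter (fun s => ‖v s‖ ^ 2 ≤ α)
  have hsum : ∑ s ∈ S, ‖v s‖ ^ 2 ≤ #S * α := by
    simpa using sum_le_card_nsmul S _ α fun s hs => (mem_filter.1 hs).2
  have hmedian := two_mul_card_sub_mul_norm_sq_medianVec_le v S
  have hcard : (0 : ℝ) < #S := by linarith [T.cast_nonneg (α := ℝ)]
  have h3α : ‖medianVec v‖ ^ 2 ≤ 3 * α := by nlinarith [sq_nonneg ‖medianVec v‖]
  linarith [sq_nonneg ‖medianVec v‖]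

/-- if `‖v s‖² ≤ α` for more than `3T/4` of the indices `s`,
then the coordinatewise median satisfies `‖median‖² ≤ 4α`. -/
theorem stmt2 {T k : ℕ} (v : Fin T → EuclideanSpace ℝ (Fin k)) (α : ℝ) (hα : 0 < α)
    (hS : (3 * T : ℝ) / 4 < (Finset.univ.filter (fun s => ‖v s‖ ^ 2 ≤ α)).card) :
    ‖medianVec v‖ ^ 2 ≤ 4 * α :=
  stmt2_general v α hS
end

section
/- Let A ∈ ℝ^{n×n} be symmetric with eigendecomposition A = Σ_j U^(j) Λ_j (U^(j))ᵀ where the blocks U^(j) correspond to groups of singular values, and let X ∈ ℝ^{n×r} have orthonormal columns. Writing X^(≤j) for the first r_j columns of X and U^(≤j) = [U^(1)|...|U^(j)], if σ_{r_{j−1}+1} ≤ e·σ_{r_j} for all j ≤ t, then ‖Π_{X_⊥} M^(≤t)‖ ≤ Σ_{j=1}^t e·σ_{r_j}·sin θ(X^(≤j), U^(≤j)), where M^(≤t) = Σ_{j≤t} U^(j)Λ_j(U^(j))ᵀ, Π_{X_⊥} = I − XXᵀ, and sin θ(X^(≤j),U^(≤j)) = ‖(I − X^(≤j)(X^(≤j))ᵀ)U^(≤j)‖.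 -/
/-! The `j`-th block `U Λⱼ Uᵀ` only involves the first `r (j + 1)` columns `Uⱼ` of `U`, and since
the range of `Xⱼ` lies in that of `X`, the projection `Π_{X⊥}` factors as `Π_{X⊥} Π_{Xⱼ⊥}`. Hence
`‖Π_{X⊥} U Λⱼ Uᵀ‖ ≤ ‖Π_{Xⱼ⊥} Uⱼ‖ ‖Λⱼ‖ ≤ λ_{r j} sin θ(Xⱼ, Uⱼ)`, the gap hypothesis replaces
`λ_{r j}` by `e λ_{r (j+1) - 1}`, and the triangle inequality sums the blocks. -/

open Matrix

/-- The spectral (operator) norm of a real matrix, via its action on Euclidean space. -/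
noncomputable def opNorm {m n : ℕ} (A : Matrix (Fin m) (Fin n) ℝ) : ℝ :=
  ‖LinearMap.toContinuousLinearMap (Matrix.toEuclideanLin A)‖

/-- The Frobenius norm of a real matrix. -/
noncomputable def frobNorm {m n : ℕ} (A : Matrix (Fin m) (Fin n) ℝ) : ℝ :=
  Real.sqrt (∑ i, ∑ j, (A i j) ^ 2)

open scoped Matrix.Norms.L2Operator

namespace Matrix

variable {k m n : Type*}

lemma l2_opNorm_transpose [Fintype m] [Fintype n] [DecidableEq m] [DecidableEq n]
    (A : Matrix m n ℝ) : ‖Aᵀ‖ = ‖A‖ := by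
  rw [← conjTranspose_eq_transpose_of_trivial, l2_opNorm_conjTranspose]

lemma l2_opNorm_transpose_mul_self [Fintype m] [Fintype n] [DecidableEq n] (A : Matrix m n ℝ) :
    ‖Aᵀ * A‖ = ‖A‖ * ‖A‖ := by
  rw [← conjTranspose_eq_transpose_of_trivial, l2_opNorm_conjTranspose_mul_self]

lemma l2_opNorm_le_one_of_transpose_mul_self_eq_one [Fintype m] [Fintype n] [DecidableEq n]
    {A : Matrix m n ℝ} (hA : Aᵀ * A = 1) : ‖A‖ ≤ 1 := by
  have h1 : ‖(1 : Matrix n n ℝ)‖ ≤ 1 := by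
    rw [← diagonal_one, l2_opNorm_diagonal]
    exact (pi_norm_le_iff_of_nonneg zero_le_one).mpr fun _ => by simp
  have hsq := l2_opNorm_transpose_mul_self A
  rw [hA] at hsq
  nlinarith [norm_nonneg A]

lemma l2_opNorm_le_one_of_isSymm_of_isIdempotentElem [Fintype n] [DecidableEq n]
    {P : Matrix n n ℝ} (hsymm : P.IsSymm) (hidem : IsIdempotentElem P) : ‖P‖ ≤ 1 := by
  have hsq := l2_opNorm_transpose_mul_self P
  rw [hsymm.eq, hidem.eq] at hsq
  nlinarith [norm_nonneg P]

lemma isSymm_one_sub_mul_transpose [Fintype n] [DecidableEq m] (X : Matrix m n ℝ) :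
    (1 - X * Xᵀ).IsSymm := by
  simp [IsSymm, transpose_sub, transpose_mul]

lemma isIdempotentElem_one_sub_mul_transpose [Fintype m] [Fintype n] [DecidableEq m]
    [DecidableEq n] {X : Matrix m n ℝ} (hX : Xᵀ * X = 1) : IsIdempotentElem (1 - X * Xᵀ) := by
  refine IsIdempotentElem.one_sub ?_
  rw [IsIdempotentElem, Matrix.mul_assoc, ← Matrix.mul_assoc Xᵀ, hX, Matrix.one_mul]

lemma one_sub_mul_transpose_mul_one_sub_submatrix [Fintype k] [Fintype m] [Fintype n]
    [DecidableEq m] [DecidableEq n] {X : Matrix m n ℝ} (hX : Xᵀ * X = 1) (e : k → n) :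
    (1 - X * Xᵀ) * (1 - X.submatrix id e * (X.submatrix id e)ᵀ) = 1 - X * Xᵀ := by
  have hsub : X * Xᵀ * X.submatrix id e = X.submatrix id e := by
    rw [← submatrix_id_id (X * Xᵀ), ← submatrix_mul _ _ _ _ _ Function.bijective_id,
      Matrix.mul_assoc, hX, Matrix.mul_one]
  rw [Matrix.mul_sub, Matrix.mul_one, ← Matrix.mul_assoc, Matrix.sub_mul, Matrix.one_mul,
    hsub, sub_self, Matrix.zero_mul, sub_zero]

lemma transpose_mul_self_submatrix_eq_one [Fintype m] [DecidableEq k] [DecidableEq n]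
    {U : Matrix m n ℝ} (hU : Uᵀ * U = 1) {e : k → n} (he : Function.Injective e) :
    (U.submatrix id e)ᵀ * U.submatrix id e = 1 := by
  rw [transpose_submatrix, ← submatrix_mul _ _ _ _ _ Function.bijective_id, hU,
    submatrix_one _ he]

lemma mul_diagonal_mul_transpose_eq_submatrix [Fintype k] [Fintype n] [DecidableEq k]
    [DecidableEq n] {U : Matrix m n ℝ} {d : n → ℝ} {e : k → n} (he : Function.Injective e)
    (hd : ∀ i ∉ Set.range e, d i = 0) :
    U * diagonal d * Uᵀ = U.submatrix id e * diagonal (d ∘ e) * (U.submatrix id e)ᵀ := by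
  ext a b
  rw [mul_apply, mul_apply]
  simp only [mul_diagonal, transpose_apply, submatrix_apply, id, Function.comp]
  exact (Fintype.sum_of_injective e he _ _ (fun i hi => by simp [hd i hi]) fun _ => rfl).symm

lemma l2_opNorm_one_sub_mul_transpose_mul_le [Fintype k] [Fintype m] [Fintype n]
    [DecidableEq k] [DecidableEq m] [DecidableEq n] {X U : Matrix m n ℝ} (hX : Xᵀ * X = 1)
    (hU : Uᵀ * U = 1) {d : n → ℝ} {e : k → n} (he : Function.Injective e)
    (hd : ∀ i ∉ Set.range e, d i = 0) :
    ‖(1 - X * Xᵀ) * (U * diagonal d * Uᵀ)‖ ≤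
      ‖d‖ * ‖(1 - X.submatrix id e * (X.submatrix id e)ᵀ) * U.submatrix id e‖ := by
  have hP : ‖1 - X * Xᵀ‖ ≤ 1 := l2_opNorm_le_one_of_isSymm_of_isIdempotentElem
    (isSymm_one_sub_mul_transpose X) (isIdempotentElem_one_sub_mul_transpose hX)
  have hD : ‖diagonal (d ∘ e)‖ ≤ ‖d‖ := by
    rw [l2_opNorm_diagonal]
    exact (pi_norm_le_iff_of_nonneg (norm_nonneg d)).mpr fun i => norm_le_pi_norm d (e i)
  have hU' : ‖(U.submatrix id e)ᵀ‖ ≤ 1 := by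
    rw [l2_opNorm_transpose]
    exact l2_opNorm_le_one_of_transpose_mul_self_eq_one
      (transpose_mul_self_submatrix_eq_one hU he)
  have hfactor : (1 - X * Xᵀ) * (U * diagonal d * Uᵀ) =
      (1 - X * Xᵀ) * ((1 - X.submatrix id e * (X.submatrix id e)ᵀ) * U.submatrix id e) *
        diagonal (d ∘ e) * (U.submatrix id e)ᵀ := by
    conv_lhs => rw [mul_diagonal_mul_transpose_eq_submatrix he hd,
      ← one_sub_mul_transpose_mul_one_sub_submatrix hX e]
    simp only [Matrix.mul_assoc]
  rw [hfactor]
  refine (l2_opNorm_mul _ _).trans ?_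
  grw [l2_opNorm_mul, l2_opNorm_mul, hP, hD, hU']
  linarith

end Matrix

/-- The paper's `Λⱼ`: the entries of `f` with index in `[r j, r (j + 1))`, the others set to `0`. -/
def blockPart {M : Type*} [Zero M] {N : ℕ} (r : ℕ → ℕ) (f : Fin N → M) (j : ℕ) : Fin N → M :=
  fun i => if r j ≤ i ∧ (i : ℕ) < r (j + 1) then f i else 0

lemma sum_blockPart {M : Type*} [AddCommGroup M] {N t : ℕ} {r : ℕ → ℕ} (hr0 : r 0 = 0)
    (hr : ∀ j < t, r j ≤ r (j + 1)) (hN : N ≤ r t) (f : Fin N → M) :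
    ∑ j ∈ Finset.range t, blockPart r f j = f := by
  let trunc : ℕ → Fin N → M := fun k i => if (i : ℕ) < r k then f i else 0
  have htelescope : ∀ j ∈ Finset.range t, blockPart r f j = trunc (j + 1) - trunc j := by
    intro j hj
    have := hr j (Finset.mem_range.mp hj)
    ext i
    simp only [blockPart, trunc, Pi.sub_apply]
    split_ifs <;> first | (exfalso; omega) | simp
  rw [Finset.sum_congr rfl htelescope, Finset.sum_range_sub]
  ext i
  simp [trunc, hr0, i.isLt.trans_le hN]

lemma blockPart_eq_zero_of_notMem_range {M : Type*} [Zero M] {N : ℕ} {r : ℕ → ℕ} {j : ℕ}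
    (h : r (j + 1) ≤ N) (f : Fin N → M) :
    ∀ i ∉ Set.range (Fin.castLE h), blockPart r f j i = 0 :=
  fun i hi => if_neg fun hij => hi ⟨⟨i, hij.2⟩, rfl⟩

lemma norm_blockPart_le {N : ℕ} {r : ℕ → ℕ} {j : ℕ} {f : Fin N → ℝ} (hf : ∀ i, 0 ≤ f i)
    (hanti : Antitone f) (h : r j < N) : ‖blockPart r f j‖ ≤ f ⟨r j, h⟩ := by
  refine (pi_norm_le_iff_of_nonneg (hf _)).mpr fun i => ?_
  unfold blockPart
  split_ifs with hi
  · rw [Real.norm_of_nonneg (hf i)]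
    exact hanti (Fin.mk_le_of_le_val hi.1)
  · simpa using hf _

lemma opNorm_eq_l2_opNorm {m n : ℕ} (A : Matrix (Fin m) (Fin n) ℝ) : opNorm A = ‖A‖ := rfl

/-- for a symmetric `M^(≤t) = U·diag(λ)·Uᵀ` whose spectrum is split into
blocks by indices `0 = r 0 < r 1 < … < r t`, with nonincreasing nonnegative `λ` and
`σ_{r_{j−1}+1} ≤ e·σ_{r_j}` for every block, and `X` with orthonormal columns,
`‖Π_{X⊥} M^(≤t)‖ ≤ Σ_j e·σ_{r_j}·sin θ(X^(≤j), U^(≤j))`, where `X^(≤j)`, `U^(≤j)`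
consist of the first `r j` columns and `sin θ(X^(≤j),U^(≤j)) = ‖(I − X^(≤j)(X^(≤j))ᵀ)U^(≤j)‖`. -/
theorem stmt10 {n t : ℕ} (r : ℕ → ℕ) (hr0 : r 0 = 0)
    (hrmono : ∀ j : ℕ, j < t → r j < r (j + 1))
    (h1 : ∀ j : Fin t, r (j : ℕ) < r t)
    (h2 : ∀ j : Fin t, r ((j : ℕ) + 1) - 1 < r t)
    (hle : ∀ j : Fin t, r ((j : ℕ) + 1) ≤ r t)
    (Ufull X : Matrix (Fin n) (Fin (r t)) ℝ)
    (hU : Ufullᵀ * Ufull = 1) (hX : Xᵀ * X = 1)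
    (lam : Fin (r t) → ℝ) (hnn : ∀ i, 0 ≤ lam i) (hanti : Antitone lam)
    (hgap : ∀ j : Fin t,
      lam ⟨r (j : ℕ), h1 j⟩ ≤ Real.exp 1 * lam ⟨r ((j : ℕ) + 1) - 1, h2 j⟩) :
    opNorm ((1 - X * Xᵀ) * (Ufull * Matrix.diagonal lam * Ufullᵀ)) ≤
      ∑ j : Fin t, Real.exp 1 * lam ⟨r ((j : ℕ) + 1) - 1, h2 j⟩ *
        opNorm ((1 - X.submatrix id (Fin.castLE (hle j)) *
            (X.submatrix id (Fin.castLE (hle j)))ᵀ) *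
          Ufull.submatrix id (Fin.castLE (hle j))) := by
  have hsplit : diagonal lam = ∑ j : Fin t, diagonal (blockPart r lam j) := by
    conv_lhs => rw [← sum_blockPart hr0 (fun j hj => (hrmono j hj).le) le_rfl lam,
      ← Fin.sum_univ_eq_sum_range]
    exact map_sum (diagonalAddMonoidHom (Fin (r t)) ℝ) _ _
  have hblock : ∀ j : Fin t,
      ‖(1 - X * Xᵀ) * (Ufull * diagonal (blockPart r lam j) * Ufullᵀ)‖ ≤
        Real.exp 1 * lam ⟨r ((j : ℕ) + 1) - 1, h2 j⟩ *
          ‖(1 - X.submatrix id (Fin.castLE (hle j)) * (X.submatrix id (Fin.castLE (hle j)))ᵀ) *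
            Ufull.submatrix id (Fin.castLE (hle j))‖ := fun j => by
    grw [l2_opNorm_one_sub_mul_transpose_mul_le hX hU (Fin.castLE_injective (hle j))
      (blockPart_eq_zero_of_notMem_range (hle j) lam), norm_blockPart_le hnn hanti (h1 j),
      hgap j]
  simp only [opNorm_eq_l2_opNorm]
  rw [hsplit, Matrix.mul_sum, Matrix.sum_mul, Matrix.mul_sum]
  exact (norm_sum_le _ _).trans (Finset.sum_le_sum fun j _ => hblock j)
end
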